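/- Follow-the-Leader makes mistakes: there exist absolute constants c > 0, d > 0 and K₀ ∈ ℕ such that for every integer K ≥ K₀, every ε with 0 < ε < d, and every integer T with c·ln K/(2ε²) ≤ T ≤ c·ln K/ε², one has ∑_{j=1}^K P_j{FTL(ω) = j} ≤ K/4. -/

import Mathlib

open MeasureTheory

/-- The Bernoulli measure on `Bool` with success probability `p` (for `p ∈ [0,1]`). -/
noncomputable def bern (p : ℝ) : Measure Bool :=
  (PMF.bernoulli (min (Real.toNNReal p) 1) (min_le_right _ _)).toMeasure

/-- The lower-bound instance `I_j`: the product measure on `K × T` reward matrices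
under which all entries are independent, entries of row `j` are Bernoulli((1+ε)/2),
and entries of every other row are Bernoulli(1/2). -/
noncomputable def lowerP (K T : ℕ) (ε : ℝ) (j : Fin K) :
    Measure (Fin K → Fin T → Bool) :=
  Measure.pi fun k => Measure.pi fun _ : Fin T =>
    bern (if k = j then (1 + ε) / 2 else 1 / 2)

/-- The number of wins `w_k(ω) = #{t : ω_{k,t} = 1}` of arm `k`. -/
def wins {K T : ℕ} (ω : Fin K → Fin T → Bool) (k : Fin K) : ℕ :=
  (Finset.univ.filter fun t : Fin T => ω k t = true).card

/-- The Follow-the-Leader prediction: the smallest index maximizing `w_k(ω)`. -/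
noncomputable def FTL {K T : ℕ} [NeZero K] (ω : Fin K → Fin T → Bool) : Fin K :=
  (Finset.univ.filter fun k : Fin K => ∀ k', wins ω k' ≤ wins ω k).min' (by
    obtain ⟨b, -, hb⟩ :=
      Finset.exists_max_image Finset.univ (wins ω) Finset.univ_nonempty
    exact ⟨b, Finset.mem_filter.mpr
      ⟨Finset.mem_univ b, fun k' => hb k' (Finset.mem_univ k')⟩⟩)

/-! Fix an estimator `f` (here FTL) and the threshold `m = T (1/2 + 2ε)`. Under `P_j` the win
count `w_j` is `Bin(T, (1+ε)/2)`, so by a Chernoff bound `P_j{w_j ≥ m} ≤ e^{-ε²T/2}`. On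
`{w_j ≤ m}` the likelihood ratio of `P_j` to the uniform measure is
`∏_t (1 ± ε) ≤ e^{ε(2 w_j - T)} ≤ e^{4ε²T}`, and the events `{f = j}` are disjoint, so
`∑_j P_j{f = j} ≤ K e^{-ε²T/2} + e^{4ε²T}`. When `ln K / 16 ≤ ε²T ≤ ln K / 8` and `K ≥ 2^96`,
this is at most `K/4`. -/

open ProbabilityTheory Real Finset

instance (p : ℝ) : IsProbabilityMeasure (bern p) :=
  PMF.toMeasure.isProbabilityMeasure _

lemma bern_real_singleton {p : ℝ} (h0 : 0 ≤ p) (h1 : p ≤ 1) (b : Bool) :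
    (bern p).real {b} = if b then p else 1 - p := by
  rw [measureReal_def, bern, PMF.toMeasure_apply_singleton _ _ (measurableSet_singleton b),
    PMF.bernoulli_apply, min_eq_left (Real.toNNReal_le_one.2 h1)]
  cases b
  · simp [ENNReal.toReal_sub_of_le, h0, h1]
  · simp [h0]

lemma integral_bern {p : ℝ} (h0 : 0 ≤ p) (h1 : p ≤ 1) (f : Bool → ℝ) :
    ∫ b, f b ∂bern p = p * f true + (1 - p) * f false := by
  rw [integral_fintype .of_finite, Fintype.sum_bool, bern_real_singleton h0 h1,
    bern_real_singleton h0 h1]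
  simp [smul_eq_mul]

lemma measureReal_pi_singleton {ι : Type*} [Fintype ι] {α : ι → Type*}
    [∀ i, MeasurableSpace (α i)] (μ : ∀ i, Measure (α i)) [∀ i, SigmaFinite (μ i)]
    (x : ∀ i, α i) : (Measure.pi μ).real {x} = ∏ i, (μ i).real {x i} := by
  simp only [measureReal_def, Measure.pi_singleton, ENNReal.toReal_prod]

lemma measureReal_le_mul_of_forall_singleton {α : Type*} [MeasurableSpace α]
    [MeasurableSingletonClass α] {μ ν : Measure α} [IsFiniteMeasure μ] [IsFiniteMeasure ν]
    {c : ℝ} {s : Set α} (hs : s.Finite) (h : ∀ x ∈ s, μ.real {x} ≤ c * ν.real {x}) :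
    μ.real s ≤ c * ν.real s := by
  rw [← hs.coe_toFinset, ← sum_measureReal_singleton, ← sum_measureReal_singleton, mul_sum]
  exact sum_le_sum fun x hx => h x (hs.mem_toFinset.1 hx)

section BernoulliProduct

variable {ι : Type*} [Fintype ι]

lemma mgf_card_filter_pi_bern {p : ℝ} (h0 : 0 ≤ p) (h1 : p ≤ 1) (t : ℝ) :
    mgf (fun x : ι → Bool => ((univ.filter fun i => x i = true).card : ℝ))
      (Measure.pi fun _ => bern p) t = (1 + p * (exp t - 1)) ^ Fintype.card ι := by
  have hprod (x : ι → Bool) : exp (t * ((univ.filter fun i => x i = true).card : ℝ))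
      = ∏ i, exp (t * if x i then 1 else 0) := by
    rw [natCast_card_filter, mul_sum, exp_sum]
  simp only [mgf, hprod]
  rw [integral_fintype_prod_eq_prod fun (_ : ι) (b : Bool) => exp (t * if b then 1 else 0),
    prod_const, card_univ, integral_bern h0 h1]
  simp only [if_true, Bool.false_eq_true, if_false, mul_one, mul_zero, exp_zero]
  ring

lemma pi_bern_real_card_filter_ge_le {ε : ℝ} (h0 : 0 ≤ ε) (h1 : ε ≤ 1) :
    (Measure.pi fun _ : ι => bern ((1 + ε) / 2)).real
        {x | Fintype.card ι * (1 / 2 + 2 * ε) ≤ ((univ.filter fun i => x i = true).card : ℝ)}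
      ≤ exp (-(ε ^ 2 * Fintype.card ι) / 2) := by
  set n : ℝ := (Fintype.card ι : ℝ)
  have hexp : exp ε - 1 ≤ ε + ε ^ 2 := by
    have := abs_exp_sub_one_sub_id_le (x := ε) (by rwa [abs_of_nonneg h0])
    linarith [le_abs_self (exp ε - 1 - ε)]
  have hmgf : (1 + (1 + ε) / 2 * (exp ε - 1)) ^ Fintype.card ι
      ≤ exp (n * ((1 + ε) / 2 * (ε + ε ^ 2))) := by
    calc (1 + (1 + ε) / 2 * (exp ε - 1)) ^ Fintype.card ι
        ≤ exp ((1 + ε) / 2 * (exp ε - 1)) ^ Fintype.card ι := by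
          gcongr
          · nlinarith [add_one_le_exp ε]
          · linarith [add_one_le_exp ((1 + ε) / 2 * (exp ε - 1))]
      _ ≤ exp (n * ((1 + ε) / 2 * (ε + ε ^ 2))) := by
          rw [← exp_nat_mul, exp_le_exp]
          gcongr
  calc _ ≤ exp (-ε * (n * (1 / 2 + 2 * ε)))
          * (1 + (1 + ε) / 2 * (exp ε - 1)) ^ Fintype.card ι := by
        rw [← mgf_card_filter_pi_bern (by linarith) (by linarith)]
        exact measure_ge_le_exp_mul_mgf _ h0 .of_finite
    _ ≤ exp (-ε * (n * (1 / 2 + 2 * ε))) * exp (n * ((1 + ε) / 2 * (ε + ε ^ 2))) := by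
        gcongr
    _ ≤ exp (-(ε ^ 2 * n) / 2) := by
        rw [← exp_add, exp_le_exp]
        have : 0 ≤ n * ε ^ 2 * (1 - ε) := mul_nonneg (by positivity) (by linarith)
        nlinarith

end BernoulliProduct

noncomputable def uniformP (K T : ℕ) : Measure (Fin K → Fin T → Bool) :=
  Measure.pi fun _ => Measure.pi fun _ : Fin T => bern (1 / 2)

instance (K T : ℕ) : IsProbabilityMeasure (uniformP K T) := by
  unfold uniformP; infer_instance

instance (K T : ℕ) (ε : ℝ) (j : Fin K) : IsProbabilityMeasure (lowerP K T ε j) := by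
  unfold lowerP; infer_instance

section LowerBound

variable {K T : ℕ} {ε : ℝ}

lemma lowerP_real_singleton (h0 : -1 ≤ ε) (h1 : ε ≤ 1) (j : Fin K)
    (ω : Fin K → Fin T → Bool) :
    (lowerP K T ε j).real {ω} =
      (∏ t, if ω j t then 1 + ε else 1 - ε) * (uniformP K T).real {ω} := by
  have hentry (k : Fin K) (b : Bool) :
      (bern (if k = j then (1 + ε) / 2 else 1 / 2)).real {b} =
        (if k = j then (if b then 1 + ε else 1 - ε) else 1) * (bern (1 / 2)).real {b} := by
    rw [bern_real_singleton (by split_ifs <;> linarith) (by split_ifs <;> linarith),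
      bern_real_singleton (by norm_num) (by norm_num)]
    split_ifs <;> ring
  simp only [lowerP, uniformP, measureReal_pi_singleton, hentry, prod_mul_distrib,
    prod_ite_irrel, prod_const_one, prod_ite_eq', mem_univ, if_true]

lemma prod_one_add_le_exp_wins (h0 : -1 ≤ ε) (h1 : ε ≤ 1) (ω : Fin K → Fin T → Bool)
    (j : Fin K) : (∏ t, if ω j t then 1 + ε else 1 - ε) ≤ exp (ε * (2 * wins ω j - T)) := by
  have hsum : (2 * wins ω j - T : ℝ) = ∑ t, if ω j t then 1 else -1 := by
    have hsign (b : Bool) : (if b then (1 : ℝ) else -1) = 2 * (if b then 1 else 0) - 1 := by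
      cases b <;> norm_num
    simp only [hsign, sum_sub_distrib, ← mul_sum, wins, natCast_card_filter]
    simp
  rw [hsum, mul_sum, exp_sum]
  refine prod_le_prod (fun t _ => ?_) (fun t _ => ?_)
  · split_ifs <;> linarith
  · split_ifs
    · simpa [add_comm] using add_one_le_exp ε
    · simpa [sub_eq_neg_add] using add_one_le_exp (-ε)

lemma lowerP_real_le_exp_mul_uniformP (h0 : 0 ≤ ε) (h1 : ε ≤ 1) (j : Fin K) {m : ℝ}
    {s : Set (Fin K → Fin T → Bool)} (hs : ∀ ω ∈ s, (wins ω j : ℝ) ≤ m) :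
    (lowerP K T ε j).real s ≤ exp (ε * (2 * m - T)) * (uniformP K T).real s := by
  refine measureReal_le_mul_of_forall_singleton s.toFinite fun ω hω => ?_
  rw [lowerP_real_singleton (by linarith) h1]
  gcongr
  refine (prod_one_add_le_exp_wins (by linarith) h1 ω j).trans ?_
  gcongr
  exact hs ω hω

lemma lowerP_real_wins_ge_le (h0 : 0 ≤ ε) (h1 : ε ≤ 1) (j : Fin K) :
    (lowerP K T ε j).real {ω | T * (1 / 2 + 2 * ε) ≤ (wins ω j : ℝ)}
      ≤ exp (-(ε ^ 2 * T) / 2) := by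
  have hrow := (measurePreserving_eval (fun k => Measure.pi fun _ : Fin T =>
    bern (if k = j then (1 + ε) / 2 else 1 / 2)) j).measureReal_preimage
    (s := {x | T * (1 / 2 + 2 * ε) ≤ ((univ.filter fun t => x t = true).card : ℝ)})
    MeasurableSet.of_discrete.nullMeasurableSet
  rw [if_pos rfl] at hrow
  rw [lowerP]
  refine hrow.le.trans ?_
  simpa using pi_bern_real_card_filter_ge_le (ι := Fin T) h0 h1

theorem sum_lowerP_real_setOf_eq_le (h0 : 0 ≤ ε) (h1 : ε ≤ 1)
    (f : (Fin K → Fin T → Bool) → Fin K) :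
    ∑ j, (lowerP K T ε j).real {ω | f ω = j}
      ≤ K * exp (-(ε ^ 2 * T) / 2) + exp (4 * (ε ^ 2 * T)) := by
  set m : ℝ := T * (1 / 2 + 2 * ε) with hm
  have hsplit (j : Fin K) : (lowerP K T ε j).real {ω | f ω = j} ≤
      exp (-(ε ^ 2 * T) / 2) + exp (4 * (ε ^ 2 * T)) * (uniformP K T).real (f ⁻¹' {j}) := by
    have hsub : {ω | f ω = j} ⊆ {ω | m ≤ wins ω j} ∪ {ω | f ω = j ∧ (wins ω j : ℝ) ≤ m} :=
      fun ω hω => (le_or_gt m (wins ω j)).imp id fun h => ⟨hω, h.le⟩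
    have hlow := lowerP_real_le_exp_mul_uniformP h0 h1 j (m := m)
      (s := {ω | f ω = j ∧ (wins ω j : ℝ) ≤ m}) fun ω hω => hω.2
    rw [show ε * (2 * m - T) = 4 * (ε ^ 2 * T) by rw [hm]; ring] at hlow
    calc _ ≤ _ := measureReal_mono hsub
      _ ≤ _ := measureReal_union_le _ _
      _ ≤ _ := add_le_add (lowerP_real_wins_ge_le h0 h1 j) <| hlow.trans <|
          mul_le_mul_of_nonneg_left (measureReal_mono fun _ hω => hω.1) (exp_pos _).le
  calc _ ≤ ∑ j : Fin K, (exp (-(ε ^ 2 * T) / 2)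
          + exp (4 * (ε ^ 2 * T)) * (uniformP K T).real (f ⁻¹' {j})) :=
        sum_le_sum fun j _ => hsplit j
    _ = _ := by
      rw [sum_add_distrib, ← mul_sum,
        sum_measureReal_preimage_singleton _ fun _ _ => MeasurableSet.of_discrete]
      simp

end LowerBound

lemma mul_exp_neg_half_add_exp_four_mul_le {K s : ℝ} (hK : 2 ^ 96 ≤ K)
    (hs₁ : log K / 16 ≤ s) (hs₂ : s ≤ log K / 8) :
    K * exp (-s / 2) + exp (4 * s) ≤ K / 4 := by
  have hK0 : 0 < K := lt_of_lt_of_le (by positivity) hK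
  have hlog : 96 * log 2 ≤ log K := by
    simpa [Real.log_pow] using Real.log_le_log (by positivity) hK
  have hlog8 : log 8 = 3 * log 2 := by
    rw [show (8 : ℝ) = 2 ^ 3 by norm_num, Real.log_pow]; norm_num
  have h₁ : exp (-s / 2) ≤ 1 / 8 := by
    rw [← exp_log (show (0 : ℝ) < 1 / 8 by norm_num), exp_le_exp, one_div, log_inv, hlog8]
    linarith
  have h₂ : exp (4 * s) ≤ K / 8 := by
    rw [← exp_log (show 0 < K / 8 by positivity), exp_le_exp, log_div hK0.ne' (by norm_num),
      hlog8]
    linarith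
  nlinarith

/-- **Follow-the-Leader makes mistakes.** There are absolute constants `c, d > 0` and
`K₀ ≥ 1` such that for every `K ≥ K₀`, every `0 < ε < d` and every horizon `T` with
`c ln K / (2 ε²) ≤ T ≤ c ln K / ε²`, one has `∑_j P_j{FTL(ω) = j} ≤ K / 4`. -/
theorem FTL_makes_mistakes :
    ∃ c > (0 : ℝ), ∃ d > (0 : ℝ), ∃ K₀ : ℕ, ∃ hK₀ : 1 ≤ K₀,
      ∀ K : ℕ, ∀ hK : K₀ ≤ K, ∀ ε : ℝ, 0 < ε → ε < d →
        ∀ T : ℕ, c * Real.log K / (2 * ε ^ 2) ≤ T → (T : ℝ) ≤ c * Real.log K / ε ^ 2 →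
          (∑ j : Fin K,
              ((lowerP K T ε j) {ω | @FTL K T ⟨by omega⟩ ω = j}).toReal)
            ≤ K / 4 := by
  refine ⟨1 / 8, by norm_num, 1, one_pos, 2 ^ 96, by norm_num,
    fun K hK ε hε hε₁ T hT₁ hT₂ => ?_⟩
  have hK' : (2 : ℝ) ^ 96 ≤ K := by exact_mod_cast hK
  have hs₁ : log K / 16 ≤ ε ^ 2 * T := by
    rw [div_le_iff₀ (by positivity)] at hT₁; linarith
  have hs₂ : ε ^ 2 * T ≤ log K / 8 := by
    rw [le_div_iff₀ (by positivity)] at hT₂; linarith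
  exact (sum_lowerP_real_setOf_eq_le hε.le hε₁.le _).trans
    (mul_exp_neg_half_add_exp_four_mul_le hK' hs₁ hs₂)
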